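/- arXiv:0910.4016 — 3 statements merged into one kernel-verified Lean document; each statement's English description precedes it below -/
import Mathlib

section
/- Let f : M → M be a C¹ map of a compact Riemannian manifold M with Lebesgue (volume) measure Leb. Suppose f is eventually volume expanding, i.e., there exists λ > 0 such that for Lebesgue almost every x ∈ M, sup_{n ≥ 1} (1/n) log |det Df^n(x)| > λ. Define h(x) = min{n > 0 : |det Df^n(x)| ≥ e^{λn}} and Γ_n = {x ∈ M : h(x) ≥ n}, and assume Leb(Γ_n) ≤ C·n^{−α} for some constants C > 0 and α > 2 (so that h ∈ L^p(Leb) for some p > 3). Then for Lebesgue almost every x ∈ M there exist C_x > 0 and a sequence σ_n → ∞ such that |det Df^n(y)| > C_x · σ_n for every n ≥ 1 and every y ∈ f^{−n}(x). -/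
open MeasureTheory Set Filter Function Real ENNReal

/-- `|det Df^n(x)|`: the absolute value of the Jacobian determinant of the `n`-th
iterate of `f` at `x`. -/
noncomputable def absDetIter {d : ℕ}
    (f : EuclideanSpace ℝ (Fin d) → EuclideanSpace ℝ (Fin d)) (n : ℕ)
    (x : EuclideanSpace ℝ (Fin d)) : ℝ :=
  |(fderiv ℝ (f^[n]) x).det|

/-- `h(x) = min {n > 0 : |det Df^n(x)| ≥ e^{λ n}}`, with value `∞` if no such `n` exists. -/
noncomputable def firstExpTime {d : ℕ}
    (f : EuclideanSpace ℝ (Fin d) → EuclideanSpace ℝ (Fin d)) (lam : ℝ)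
    (x : EuclideanSpace ℝ (Fin d)) : ℕ∞ :=
  sInf {N : ℕ∞ | ∃ m : ℕ, (m : ℕ∞) = N ∧ 0 < m ∧ Real.exp (lam * m) ≤ absDetIter f m x}

/-- `Γ_n = {x ∈ M : h(x) ≥ n}`. -/
noncomputable def GammaSet {d : ℕ} (M : Set (EuclideanSpace ℝ (Fin d)))
    (f : EuclideanSpace ℝ (Fin d) → EuclideanSpace ℝ (Fin d)) (lam : ℝ) (n : ℕ) :
    Set (EuclideanSpace ℝ (Fin d)) :=
  {x ∈ M | (n : ℕ∞) ≤ firstExpTime f lam x}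

/-!
For `c > 0` let `B(n, c)` be the set of points having an `n`-th preimage `y ∈ M` with
`|det Df^n(y)| ≤ c`. Cutting the orbit of `y` at successive first expansion times, after `n - r`
steps one reaches a point `z ∈ Γ_{r+1}` with `|det Df^r(z)| ≤ c e^{-λ(n-r)}`. Hence, by the change
of variables inequality, `Leb B(n, c) ≤ c ∑_{r ≤ n} e^{-λ(n-r)} Leb Γ_{r+1}`, a convolution of a
geometric sequence with a summable one. By Borel–Cantelli almost every `x`
lies in only finitely many `B(n, k)` for every `k ∈ ℕ`, which yields the rates `σ_n`.
-/

open Finset in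
theorem ENNReal.tsum_mul_tsum_eq_tsum_sum_range (f g : ℕ → ℝ≥0∞) :
    (∑' n, f n) * ∑' n, g n = ∑' n, ∑ k ∈ range (n + 1), f k * g (n - k) := by
  simp_rw [← Nat.sum_antidiagonal_eq_sum_range_succ fun k l ↦ f k * g l]
  calc (∑' n, f n) * ∑' n, g n = ∑' p : ℕ × ℕ, f p.1 * g p.2 := by
        rw [ENNReal.tsum_prod (f := fun k l ↦ f k * g l), ← ENNReal.tsum_mul_right]
        simp_rw [← ENNReal.tsum_mul_left]
    _ = ∑' x : Σ n, antidiagonal n, f x.2.1.1 * g x.2.1.2 :=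
        (HasAntidiagonal.sigmaAntidiagonalEquivProd.tsum_eq (fun p ↦ f p.1 * g p.2)).symm
    _ = ∑' n, ∑' kl : antidiagonal n, f kl.1.1 * g kl.1.2 := ENNReal.tsum_sigma' _
    _ = ∑' n, ∑ kl ∈ antidiagonal n, f kl.1 * g kl.2 := by
        congr! 2 with n
        rw [tsum_fintype (L := .unconditional _),
          sum_coe_sort (antidiagonal n) fun kl ↦ f kl.1 * g kl.2]

theorem exists_tendsto_atTop_forall_lt {s : ℕ → Set ℝ} (hs : ∀ n, ∀ t ∈ s n, 0 ≤ t)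
    (h : ∀ k : ℕ, ∀ᶠ n in atTop, ∀ t ∈ s n, (k : ℝ) < t) :
    ∃ σ : ℕ → ℝ, Tendsto σ atTop atTop ∧ ∀ n, ∀ t ∈ s n, σ n < t := by
  choose N hN using fun k ↦ eventually_atTop.1 (h k)
  -- `K n` is the largest threshold `k ≤ n` already passed at time `n` (or `0`).
  set K : ℕ → ℕ := fun n ↦ Nat.findGreatest (fun k ↦ N k ≤ n) n
  have hK : Tendsto K atTop atTop := tendsto_atTop_atTop.2 fun b ↦
    ⟨max b (N b), fun n hn ↦ Nat.le_findGreatest ((le_max_left _ _).trans hn)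
      ((le_max_right _ _).trans hn)⟩
  refine ⟨fun n ↦ K n - 1, tendsto_atTop_add_const_right _ _
    (tendsto_natCast_atTop_atTop.comp hK), fun n t ht ↦ ?_⟩
  rcases Nat.eq_zero_or_pos (K n) with hzero | hpos
  · simp only [hzero, Nat.cast_zero]
    linarith [hs n t ht]
  · linarith [hN (K n) n (Nat.findGreatest_of_ne_zero (P := fun k ↦ N k ≤ n) rfl hpos.ne') t ht]

theorem ContDiff.iterate {𝕜 E : Type*} [NontriviallyNormedField 𝕜] [NormedAddCommGroup E]
    [NormedSpace 𝕜 E] {f : E → E} {n : WithTop ℕ∞} (hf : ContDiff 𝕜 n f) (k : ℕ) :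
    ContDiff 𝕜 n f^[k] := by
  induction k with
  | zero => exact contDiff_id
  | succ k ih => rw [iterate_succ']; exact hf.comp ih

section Jacobian

variable {d : ℕ} {f : EuclideanSpace ℝ (Fin d) → EuclideanSpace ℝ (Fin d)}

theorem absDetIter_add (hf : Differentiable ℝ f) (k m : ℕ) (x : EuclideanSpace ℝ (Fin d)) :
    absDetIter f (k + m) x = absDetIter f k (f^[m] x) * absDetIter f m x := by
  rw [absDetIter, iterate_add, fderiv_comp x (hf.iterate k _) (hf.iterate m _),
    ContinuousLinearMap.det, ContinuousLinearMap.toLinearMap_comp, LinearMap.det_comp, abs_mul]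
  rfl

theorem continuous_absDetIter (hf : ContDiff ℝ 1 f) (n : ℕ) : Continuous (absDetIter f n) :=
  continuous_abs.comp <| ContinuousLinearMap.continuous_det.comp <|
    (hf.iterate n).continuous_fderiv one_ne_zero

end Jacobian

theorem addHaar_image_le_mul_of_abs_det_le {E : Type*} [NormedAddCommGroup E] [NormedSpace ℝ E]
    [FiniteDimensional ℝ E] [MeasurableSpace E] [BorelSpace E] (μ : Measure E)
    [μ.IsAddHaarMeasure] {g : E → E} {g' : E → E →L[ℝ] E} {s : Set E} {c : ℝ}
    (hs : MeasurableSet s) (hg : ∀ x ∈ s, HasFDerivWithinAt g (g' x) s x)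
    (hc : ∀ x ∈ s, |(g' x).det| ≤ c) : μ (g '' s) ≤ ENNReal.ofReal c * μ s := by
  rw [← setLIntegral_const]
  exact (addHaar_image_le_lintegral_abs_det_fderiv μ hs hg).trans
    (setLIntegral_mono measurable_const fun x hx ↦ ofReal_le_ofReal (hc x hx))

section ExpansionTime

variable {d : ℕ} {f : EuclideanSpace ℝ (Fin d) → EuclideanSpace ℝ (Fin d)} {lam : ℝ}

theorem le_firstExpTime_iff {k : ℕ} {x : EuclideanSpace ℝ (Fin d)} :
    (k : ℕ∞) ≤ firstExpTime f lam x ↔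
      ∀ m : ℕ, 0 < m → m < k → absDetIter f m x < exp (lam * m) := by
  simp only [firstExpTime, le_sInf_iff, mem_ofPred_eq]
  constructor
  · intro h m hm hmk
    by_contra! hle
    exact absurd (h m ⟨m, rfl, hm, hle⟩) (by exact_mod_cast hmk.not_ge)
  · rintro h _ ⟨m, rfl, hm, hle⟩
    by_contra! hmk
    exact (h m hm (by exact_mod_cast hmk)).not_ge hle

theorem measurableSet_gammaSet {M : Set (EuclideanSpace ℝ (Fin d))} (hM : MeasurableSet M)
    (hf : ContDiff ℝ 1 f) (lam : ℝ) (k : ℕ) : MeasurableSet (GammaSet M f lam k) := by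
  have : GammaSet M f lam k =
      M ∩ ⋂ (m : ℕ) (_ : 0 < m) (_ : m < k), {x | absDetIter f m x < exp (lam * m)} := by
    ext x
    simp [GammaSet, le_firstExpTime_iff]
  rw [this]
  exact hM.inter <| .iInter fun m ↦ .iInter fun _ ↦ .iInter fun _ ↦
    measurableSet_lt (continuous_absDetIter hf m).measurable measurable_const

/-- Split off an initial block of length `m` with `exp (lam * m) ≤ absDetIter f m y` and recurse,
until the remaining tail is shorter than the expansion time of its starting point. -/
theorem exists_tail_lt_firstExpTime (hf : Differentiable ℝ f) (lam : ℝ) (n : ℕ)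
    (y : EuclideanSpace ℝ (Fin d)) :
    ∃ r ≤ n, ((r + 1 : ℕ) : ℕ∞) ≤ firstExpTime f lam (f^[n - r] y) ∧
      exp (lam * (n - r : ℕ)) * absDetIter f r (f^[n - r] y) ≤ absDetIter f n y := by
  induction n using Nat.strong_induction_on generalizing y with
  | _ n ih =>
  by_cases hy : ((n + 1 : ℕ) : ℕ∞) ≤ firstExpTime f lam y
  · exact ⟨n, le_rfl, by simpa using hy, by simp⟩
  rw [le_firstExpTime_iff] at hy
  push Not at hy
  obtain ⟨m, hm, hmn, hexp⟩ := hy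
  obtain ⟨r, hr, htail, hle⟩ := ih (n - m) (by omega) (f^[m] y)
  have hiter : f^[n - m - r] (f^[m] y) = f^[n - r] y := by
    rw [← iterate_add_apply]
    congr 1
    omega
  rw [hiter] at htail hle
  refine ⟨r, by omega, htail, ?_⟩
  have hsplit : n - r = (n - m - r) + m := by omega
  calc exp (lam * (n - r : ℕ)) * absDetIter f r (f^[n - r] y)
      = exp (lam * (n - m - r : ℕ)) * absDetIter f r (f^[n - r] y) * exp (lam * m) := by
        rw [mul_right_comm, ← exp_add, hsplit, Nat.cast_add, mul_add]
    _ ≤ absDetIter f (n - m) (f^[m] y) * absDetIter f m y :=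
        mul_le_mul hle hexp (exp_pos _).le (abs_nonneg _)
    _ = absDetIter f n y := by rw [← absDetIter_add hf, Nat.sub_add_cancel (by omega)]

end ExpansionTime

section BadSets

variable {d : ℕ} {M : Set (EuclideanSpace ℝ (Fin d))}
  {f : EuclideanSpace ℝ (Fin d) → EuclideanSpace ℝ (Fin d)}

def lowJacobianImage (M : Set (EuclideanSpace ℝ (Fin d)))
    (f : EuclideanSpace ℝ (Fin d) → EuclideanSpace ℝ (Fin d)) (n : ℕ) (c : ℝ) :
    Set (EuclideanSpace ℝ (Fin d)) :=
  f^[n] '' {y ∈ M | absDetIter f n y ≤ c}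

theorem lowJacobianImage_subset (hf : Differentiable ℝ f) (hfM : MapsTo f M M) (lam : ℝ)
    (n : ℕ) (c : ℝ) :
    lowJacobianImage M f n c ⊆ ⋃ r ∈ Finset.range (n + 1),
      f^[r] '' {z ∈ GammaSet M f lam (r + 1) | absDetIter f r z ≤ c * exp (-lam) ^ (n - r)} := by
  rintro _ ⟨y, ⟨hyM, hyc⟩, rfl⟩
  obtain ⟨r, hr, htail, hle⟩ := exists_tail_lt_firstExpTime hf lam n y
  refine mem_biUnion (Finset.mem_range.2 (by omega))
    ⟨f^[n - r] y, ⟨⟨hfM.iterate _ hyM, htail⟩, ?_⟩, ?_⟩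
  · have hpow : exp (-lam) ^ (n - r) = (exp (lam * (n - r : ℕ)))⁻¹ := by
      rw [← exp_nat_mul, ← exp_neg]
      ring_nf
    rw [hpow, ← div_eq_mul_inv, le_div_iff₀ (exp_pos _), mul_comm]
    exact hle.trans hyc
  · rw [← iterate_add_apply, Nat.add_sub_cancel' hr]

theorem volume_lowJacobianImage_le (hM : MeasurableSet M) (hf : ContDiff ℝ 1 f)
    (hfM : MapsTo f M M) (lam : ℝ) (n : ℕ) (c : ℝ) :
    volume (lowJacobianImage M f n c) ≤ ENNReal.ofReal c *
      ∑ r ∈ Finset.range (n + 1),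
        volume (GammaSet M f lam (r + 1)) * ENNReal.ofReal (exp (-lam)) ^ (n - r) := by
  have hdiff (r : ℕ) : Differentiable ℝ f^[r] := (hf.iterate r).differentiable one_ne_zero
  calc volume (lowJacobianImage M f n c)
      ≤ ∑ r ∈ Finset.range (n + 1), volume (f^[r] ''
          {z ∈ GammaSet M f lam (r + 1) | absDetIter f r z ≤ c * exp (-lam) ^ (n - r)}) :=
        (measure_mono (lowJacobianImage_subset (hf.differentiable one_ne_zero) hfM lam n c)).trans
          (measure_biUnion_finset_le _ _)
    _ ≤ ∑ r ∈ Finset.range (n + 1), ENNReal.ofReal (c * exp (-lam) ^ (n - r)) *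
          volume (GammaSet M f lam (r + 1)) := by
        refine Finset.sum_le_sum fun r _ ↦ ?_
        refine (addHaar_image_le_mul_of_abs_det_le volume ?_
          (fun z _ ↦ (hdiff r z).hasFDerivAt.hasFDerivWithinAt) fun z hz ↦ hz.2).trans ?_
        · exact (measurableSet_gammaSet hM hf lam _).inter
            (measurableSet_le (continuous_absDetIter hf r).measurable measurable_const)
        · exact mul_le_mul_right (measure_mono fun z hz ↦ hz.1) _
    _ = _ := by
        rw [Finset.mul_sum]
        refine Finset.sum_congr rfl fun r _ ↦ ?_
        rw [ENNReal.ofReal_mul' (by positivity), ENNReal.ofReal_pow (exp_pos _).le]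
        ring

theorem tsum_volume_lowJacobianImage_ne_top (hM : MeasurableSet M) (hf : ContDiff ℝ 1 f)
    (hfM : MapsTo f M M) {lam : ℝ} (hlam : 0 < lam)
    (hΓ : ∑' r, volume (GammaSet M f lam (r + 1)) ≠ ∞) (c : ℝ) :
    ∑' n, volume (lowJacobianImage M f n c) ≠ ∞ := by
  have hq : ENNReal.ofReal (exp (-lam)) < 1 :=
    ENNReal.ofReal_lt_one.2 (exp_lt_one_iff.2 (neg_lt_zero.2 hlam))
  refine ne_top_of_le_ne_top ?_
    (ENNReal.tsum_le_tsum fun n ↦ volume_lowJacobianImage_le hM hf hfM lam n c)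
  rw [ENNReal.tsum_mul_left, ← ENNReal.tsum_mul_tsum_eq_tsum_sum_range, ENNReal.tsum_geometric]
  exact mul_ne_top ofReal_ne_top (mul_ne_top hΓ (inv_ne_top.2 (tsub_pos_of_lt hq).ne'))

end BadSets

theorem backward_contraction_of_eventual_expansion_general {d : ℕ}
    (M : Set (EuclideanSpace ℝ (Fin d))) (hM : IsCompact M)
    (f : EuclideanSpace ℝ (Fin d) → EuclideanSpace ℝ (Fin d))
    (hf : ContDiff ℝ 1 f) (hfM : MapsTo f M M)
    (lam : ℝ) (hlam : 0 < lam)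
    (C α : ℝ) (hα : 2 < α)
    (hGamma : ∀ n : ℕ, 1 ≤ n →
      volume (GammaSet M f lam n) ≤ ENNReal.ofReal (C * (n : ℝ) ^ (-α))) :
    ∀ᵐ x ∂(volume.restrict M), ∃ Cx : ℝ, 0 < Cx ∧ ∃ σ : ℕ → ℝ,
      Tendsto σ atTop atTop ∧
      ∀ n : ℕ, 1 ≤ n → ∀ y ∈ M, f^[n] y = x → Cx * σ n < absDetIter f n y := by
  have hΓ : ∑' r, volume (GammaSet M f lam (r + 1)) ≠ ∞ := by
    have hsum : Summable fun r : ℕ ↦ C * ((r + 1 : ℕ) : ℝ) ^ (-α) :=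
      ((summable_nat_add_iff 1).2 (Real.summable_nat_rpow.2 (by linarith))).mul_left C
    exact ne_top_of_le_ne_top hsum.tsum_ofReal_ne_top
      (ENNReal.tsum_le_tsum fun r ↦ hGamma (r + 1) r.succ_pos)
  have hBC : ∀ᵐ x, ∀ k : ℕ, ∀ᶠ n in atTop, x ∉ lowJacobianImage M f n k :=
    ae_all_iff.2 fun k ↦ ae_eventually_notMem
      (tsum_volume_lowJacobianImage_ne_top hM.measurableSet hf hfM hlam hΓ k)
  filter_upwards [ae_restrict_of_ae hBC] with x hx
  obtain ⟨σ, hσ, hlt⟩ := exists_tendsto_atTop_forall_lt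
    (s := fun n ↦ absDetIter f n '' {y ∈ M | f^[n] y = x})
    (by rintro n _ ⟨y, -, rfl⟩; exact abs_nonneg _) fun k ↦ (hx k).mono fun n hn ↦ by
      rintro _ ⟨y, ⟨hyM, hyx⟩, rfl⟩
      by_contra! hle
      exact hn ⟨y, ⟨hyM, hle⟩, hyx⟩
  exact ⟨1, one_pos, σ, hσ, fun n _ y hy hyx ↦ by simpa using hlt n _ ⟨y, ⟨hy, hyx⟩, rfl⟩⟩

/-- For an eventually volume expanding map with polynomial decay (exponent `α > 2`) of
`Leb (Γ_n)`, Lebesgue almost every point has uniform backward volume contraction on all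
of its pre-orbits, with rates `σ_n → ∞`. -/
theorem backward_contraction_of_eventual_expansion {d : ℕ}
    (M : Set (EuclideanSpace ℝ (Fin d))) (hM : IsCompact M)
    (f : EuclideanSpace ℝ (Fin d) → EuclideanSpace ℝ (Fin d))
    (hf : ContDiff ℝ 1 f) (hfM : MapsTo f M M)
    (lam : ℝ) (hlam : 0 < lam)
    (h_expanding : ∀ᵐ x ∂(volume.restrict M),
      ∃ n : ℕ, 1 ≤ n ∧ lam < (1 / n) * Real.log (absDetIter f n x))
    (C α : ℝ) (hC : 0 < C) (hα : 2 < α)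
    (hGamma : ∀ n : ℕ, 1 ≤ n →
      volume (GammaSet M f lam n) ≤ ENNReal.ofReal (C * (n : ℝ) ^ (-α))) :
    ∀ᵐ x ∂(volume.restrict M), ∃ Cx : ℝ, 0 < Cx ∧ ∃ σ : ℕ → ℝ,
      Tendsto σ atTop atTop ∧
      ∀ n : ℕ, 1 ≤ n → ∀ y ∈ M, f^[n] y = x → Cx * σ n < absDetIter f n y :=
  backward_contraction_of_eventual_expansion_general M hM f hf hfM lam hlam C α hα hGamma
end

section
/- Let f : M → M be a measurable map of a compact Riemannian manifold M with Lebesgue measure Leb, with finite fibers (every set f^{−n}(x) is finite), and let (U_n)_{n≥1} be a concatenated collection of measurable subsets of M whose union has full Lebesgue measure. If ∑_{n≥1} ∑_{j=0}^{n−1} Leb(f^j(u^{−1}(n))) < ∞, then for Lebesgue almost every x ∈ M one has sup{ u(y) : y ∈ ⋃_{n≥1} U_n and x ∈ C(y) } < ∞, i.e., the lengths of the chains containing x are uniformly bounded. -/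
open MeasureTheory Set Filter Function

/-- For `x` in `⋃_{n ≥ 1} U_n`, `u x` is the least `n ≥ 1` with `x ∈ U n`
(and `u x = 0` if there is no such `n`). -/
noncomputable def chainIndex {E : Type*} (U : ℕ → Set E) (x : E) : ℕ :=
  sInf {n : ℕ | 1 ≤ n ∧ x ∈ U n}

/-!
By Borel–Cantelli, the summability of the measures of the tower levels
`⋃_{j < n} f^j(u⁻¹(n))` means that almost every `x` lies in only finitely many of them,
i.e. in none of them beyond some `N`; a chain of length `n > N` through `x` would put `x`
in the `n`-th level.
-/

section ChainTower

variable {α : Type*} (f : α → α) (U : ℕ → Set α)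

def chainTowerLevel (n : ℕ) : Set α :=
  ⋃ j ∈ Finset.range n, f^[j] '' {x | chainIndex U x = n}

theorem mem_chainTowerLevel_chainIndex {x y : α} {j : ℕ} (hj : j < chainIndex U y)
    (hx : f^[j] y = x) : x ∈ chainTowerLevel f U (chainIndex U y) :=
  mem_biUnion (Finset.mem_range.mpr hj) ⟨y, rfl, hx⟩

theorem measure_chainTowerLevel_le [MeasurableSpace α] (μ : Measure α) (n : ℕ) :
    μ (chainTowerLevel f U n) ≤ ∑ j ∈ Finset.range n, μ (f^[j] '' {x | chainIndex U x = n}) :=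
  measure_biUnion_finset_le _ _

theorem ae_bddAbove_chainIndex_of_tsum_ne_top [MeasurableSpace α] (μ : Measure α)
    (hsum : ∑' n, ∑ j ∈ Finset.range n, μ (f^[j] '' {x | chainIndex U x = n}) ≠ ⊤) :
    ∀ᵐ x ∂μ, ∃ N : ℕ, ∀ y, (∃ j < chainIndex U y, f^[j] y = x) → chainIndex U y ≤ N := by
  have hlevels : ∑' n, μ (chainTowerLevel f U n) ≠ ⊤ :=
    ne_top_of_le_ne_top hsum (ENNReal.tsum_le_tsum (measure_chainTowerLevel_le f U μ))
  filter_upwards [ae_eventually_notMem hlevels] with x hx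
  obtain ⟨N, hN⟩ := eventually_atTop.mp hx
  refine ⟨N, fun y ⟨j, hj, hjx⟩ => ?_⟩
  by_contra! hlong
  exact hN _ hlong.le (mem_chainTowerLevel_chainIndex f U hj hjx)

end ChainTower

/-- Here `x ∈ C(y)` is expressed as `∃ j < u(y), f^[j] y = x`. -/
theorem bounded_chains_of_summable_tower_general {d : ℕ}
    (M : Set (EuclideanSpace ℝ (Fin d)))
    (f : EuclideanSpace ℝ (Fin d) → EuclideanSpace ℝ (Fin d))
    (U : ℕ → Set (EuclideanSpace ℝ (Fin d)))
    (hsum : (∑' n : ℕ, ∑ j ∈ Finset.range n,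
        volume (f^[j] '' {x | chainIndex U x = n})) < ⊤) :
    ∀ᵐ x ∂(volume.restrict M), ∃ N : ℕ, ∀ y : EuclideanSpace ℝ (Fin d),
      (∃ n, 1 ≤ n ∧ y ∈ U n) → (∃ j < chainIndex U y, f^[j] y = x) →
      chainIndex U y ≤ N := by
  filter_upwards [ae_restrict_of_ae (ae_bddAbove_chainIndex_of_tsum_ne_top f U volume hsum.ne)]
    with x ⟨N, hN⟩
  exact ⟨N, fun y _ hy => hN y hy⟩

/-- Lemma 1: if the "tower" over the chains of a concatenated collection has finite
Lebesgue measure, then almost every point belongs only to chains of uniformly bounded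
length. Here `x ∈ C(y)` is expressed as `∃ j < u(y), f^[j] y = x`. -/
theorem bounded_chains_of_summable_tower {d : ℕ}
    (M : Set (EuclideanSpace ℝ (Fin d))) (hM : IsCompact M)
    (f : EuclideanSpace ℝ (Fin d) → EuclideanSpace ℝ (Fin d))
    (hf : Measurable f) (hfM : MapsTo f M M)
    (hfib : ∀ (x : EuclideanSpace ℝ (Fin d)) (n : ℕ), (f^[n] ⁻¹' {x}).Finite)
    (U : ℕ → Set (EuclideanSpace ℝ (Fin d)))
    (hUM : ∀ n, 1 ≤ n → U n ⊆ M)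
    (hUmeas : ∀ n, 1 ≤ n → MeasurableSet (U n))
    (hUfull : volume (M \ ⋃ n, ⋃ (_ : 1 ≤ n), U n) = 0)
    (hconc : ∀ n m, 1 ≤ n → 1 ≤ m → ∀ x, x ∈ U n → f^[n] x ∈ U m → x ∈ U (n + m))
    (hsum : (∑' n : ℕ, ∑ j ∈ Finset.range n,
        volume (f^[j] '' {x | chainIndex U x = n})) < ⊤) :
    ∀ᵐ x ∂(volume.restrict M), ∃ N : ℕ, ∀ y : EuclideanSpace ℝ (Fin d),
      (∃ n, 1 ≤ n ∧ y ∈ U n) → (∃ j < chainIndex U y, f^[j] y = x) →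
      chainIndex U y ≤ N :=
  bounded_chains_of_summable_tower_general M f U hsum
end

section
/- Let g : S¹ × I → S¹ × I be a C¹ map of the forward-invariant region S¹ × I ⊂ S¹ × ℝ (a Viana map or a C⁰-small perturbation of the skew product (s,x) ↦ (ds mod 1, a₀ + α sin(2πs) − x²)), let λ > 0, define h(X) = min{n > 0 : |det Dg^n(X)| ≥ e^{λn}} and Γ_n = {X ∈ S¹ × I : h(X) ≥ n}, and suppose there exist constants C, c > 0 such that Leb(Γ_n) ≤ C·e^{−c√n} for every n ≥ 1. Then there exists β > 0 such that for Lebesgue almost every X ∈ S¹ × I there is C_X > 0 with |det Dg^n(Y)| > C_X · e^{β√n} for every n ≥ 1 and every Y ∈ g^{−n}(X). -/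
open MeasureTheory Set Function Real

/-- `|det DG^n(X)|` for a map `G` of the plane (a lift of a cylinder map `S¹ × ℝ`):
the absolute value of the Jacobian determinant of the `n`-th iterate of `G` at `X`. -/
noncomputable def absDetIter2 (G : ℝ × ℝ → ℝ × ℝ) (n : ℕ) (X : ℝ × ℝ) : ℝ :=
  |(fderiv ℝ (G^[n]) X).det|

/-- `h(X) = min {n > 0 : |det DG^n(X)| ≥ e^{λ n}}`, with value `∞` if no such `n`
exists. -/
noncomputable def firstExpTime2 (G : ℝ × ℝ → ℝ × ℝ) (lam : ℝ) (X : ℝ × ℝ) : ℕ∞ :=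
  sInf {N : ℕ∞ | ∃ m : ℕ, (m : ℕ∞) = N ∧ 0 < m ∧
    Real.exp (lam * m) ≤ absDetIter2 G m X}

/-! Cut the orbit of an `n`-th preimage `Y` at its hyperbolic times (`|det DG^m| ≥ e^{λm}`).
If `|det DG^n(Y)| ≤ e^{β√n}`, the last stretch, of length `r`, starts at a point of `Γ_{r+1}`
whose Jacobian along it is at most `e^{β√n - λ(n-r)}`. By the area formula the points `X` having
such a preimage have measure at most `(n+1) C e^{-β√(n+1)}`, which is summable, so Borel–Cantelli
handles all large `n`. For each fixed `n`, the points having preimages of arbitrarily small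
Jacobian have measure `≤ ε Leb(S¹ × I)` for every `ε`, which handles the finitely many small `n`. -/

open Filter Topology Finset.HasAntidiagonal

namespace VianaBackwardContraction

section Jacobian

variable {G : ℝ × ℝ → ℝ × ℝ}

theorem measurable_absDetIter2 (n : ℕ) : Measurable (absDetIter2 G n) :=
  (ContinuousLinearMap.continuous_det.measurable.comp (measurable_fderiv ℝ _)).abs

theorem absDetIter2_add (hG : Differentiable ℝ G) (a b : ℕ) (Y : ℝ × ℝ) :
    absDetIter2 G (a + b) Y = absDetIter2 G a (G^[b] Y) * absDetIter2 G b Y := by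
  rw [absDetIter2, absDetIter2, absDetIter2, ← abs_mul, iterate_add,
    fderiv_comp Y ((hG.iterate a) _) ((hG.iterate b) Y)]
  exact congrArg abs (LinearMap.det_comp _ _)

end Jacobian

section HyperbolicTimes

variable {G : ℝ × ℝ → ℝ × ℝ} {lam : ℝ}

theorem natCast_le_firstExpTime2_iff (q : ℕ) (Z : ℝ × ℝ) :
    (q : ℕ∞) ≤ firstExpTime2 G lam Z ↔
      ∀ m : ℕ, 0 < m → m < q → absDetIter2 G m Z < exp (lam * m) := by
  simp only [firstExpTime2, le_sInf_iff, mem_ofPred_eq, forall_exists_index, and_imp]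
  constructor
  · intro H m hm hmq
    by_contra! h
    exact absurd (H m m rfl hm h) (by exact_mod_cast hmq.not_ge)
  · rintro H _ m rfl hm hle
    by_contra! h
    exact (H m hm (by exact_mod_cast h)).not_ge hle

theorem measurableSet_natCast_le_firstExpTime2 (q : ℕ) :
    MeasurableSet {Z | (q : ℕ∞) ≤ firstExpTime2 G lam Z} := by
  simp only [natCast_le_firstExpTime2_iff, ofPred_forall]
  exact .iInter fun m => .iInter fun _ => .iInter fun _ =>
    measurableSet_lt (measurable_absDetIter2 m) measurable_const

/-- Cut the orbit of `Y` at successive times `m` with `|det DG^m| ≥ e^{λm}`; the final stretch,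
of length `r`, contains no such time. -/
theorem exists_add_eq_le_firstExpTime2 (hG : Differentiable ℝ G) (lam : ℝ) (n : ℕ)
    (Y : ℝ × ℝ) :
    ∃ r s : ℕ, r + s = n ∧ ((r + 1 : ℕ) : ℕ∞) ≤ firstExpTime2 G lam (G^[s] Y) ∧
      exp (lam * s) * absDetIter2 G r (G^[s] Y) ≤ absDetIter2 G n Y := by
  induction n using Nat.strong_induction_on generalizing Y with
  | _ n ih =>
  by_cases hh : ((n + 1 : ℕ) : ℕ∞) ≤ firstExpTime2 G lam Y
  · exact ⟨n, 0, rfl, hh, by simp⟩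
  obtain ⟨m, hm0, hmn, hmY⟩ : ∃ m : ℕ, 0 < m ∧ m ≤ n ∧ exp (lam * m) ≤ absDetIter2 G m Y := by
    simp only [natCast_le_firstExpTime2_iff, not_forall, not_lt] at hh
    obtain ⟨m, hm0, hmn, hle⟩ := hh
    exact ⟨m, hm0, by omega, hle⟩
  obtain ⟨r, s, hrs, hr, hs⟩ := ih (n - m) (by omega) (G^[m] Y)
  refine ⟨r, s + m, by omega, by rwa [iterate_add_apply], ?_⟩
  rw [iterate_add_apply, show n = (n - m) + m by omega, absDetIter2_add hG, Nat.cast_add,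
    mul_add, exp_add]
  calc exp (lam * s) * exp (lam * m) * absDetIter2 G r (G^[s] (G^[m] Y))
      = exp (lam * s) * absDetIter2 G r (G^[s] (G^[m] Y)) * exp (lam * m) := by ring
    _ ≤ absDetIter2 G (n - m) (G^[m] Y) * absDetIter2 G m Y :=
      mul_le_mul hs hmY (exp_pos _).le (abs_nonneg _)

end HyperbolicTimes

theorem map_add_zsmul {E : Type*} [AddCommGroup E] {f : E → E} {w : E} {k : ℤ}
    (hf : ∀ x, f (x + w) = f x + k • w) (m : ℤ) (x : E) :
    f (x + m • w) = f x + (m * k) • w := by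
  induction m using Int.induction_on with
  | zero => simp
  | succ i ih => rw [add_one_zsmul, ← add_assoc, hf, ih, add_assoc, ← add_zsmul, add_one_mul]
  | pred i ih =>
    have h := hf (x + (-(i : ℤ) - 1) • w)
    rw [add_assoc, ← add_one_zsmul, sub_add_cancel, ih] at h
    rw [eq_sub_of_add_eq h.symm, add_sub_assoc, sub_one_mul, sub_zsmul, sub_eq_add_neg]

theorem iterate_map_add_zsmul {E : Type*} [AddCommGroup E] {f : E → E} {w : E} {k : ℤ}
    (hf : ∀ x, f (x + w) = f x + k • w) (n : ℕ) (m : ℤ) (x : E) :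
    f^[n] (x + m • w) = f^[n] x + (m * k ^ n) • w := by
  induction n generalizing m with
  | zero => simp
  | succ n ih => rw [iterate_succ_apply', iterate_succ_apply', ih, map_add_zsmul hf, pow_succ,
      mul_assoc]

theorem fderiv_apply_add_eq {E F : Type*} [NormedAddCommGroup E] [NormedSpace ℝ E]
    [NormedAddCommGroup F] [NormedSpace ℝ F] {f : E → F} {a : E} {b : F}
    (hf : ∀ x, f (x + a) = f x + b) (x : E) :
    fderiv ℝ f (x + a) = fderiv ℝ f x := by
  rw [← fderiv_comp_add_right, funext hf, fderiv_add_const]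

theorem prod_intCast_zero_eq_zsmul (m : ℤ) : ((m : ℝ), (0 : ℝ)) = m • ((1 : ℝ), (0 : ℝ)) := by
  simp

theorem add_intCast_add_intCast (X : ℝ × ℝ) (a b : ℤ) :
    X + ((a : ℝ), (0 : ℝ)) + ((b : ℝ), (0 : ℝ)) = X + (((a + b : ℤ) : ℝ), (0 : ℝ)) := by
  ext <;> simp [add_assoc]

theorem exists_add_intCast_fst_mem_Ico (X : ℝ × ℝ) :
    ∃ j : ℤ, (X + ((j : ℝ), (0 : ℝ))).1 ∈ Ico (0 : ℝ) 1 :=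
  ⟨-⌊X.1⌋, by
    simp only [Prod.fst_add, Int.cast_neg, ← sub_eq_add_neg, Int.self_sub_floor]
    exact ⟨Int.fract_nonneg _, Int.fract_lt_one _⟩⟩

theorem addHaar_image_le_ofReal_mul {E : Type*} [NormedAddCommGroup E] [NormedSpace ℝ E]
    [FiniteDimensional ℝ E] [MeasurableSpace E] [BorelSpace E] (μ : Measure E)
    [μ.IsAddHaarMeasure] {f : E → E} {f' : E → E →L[ℝ] E} {s : Set E} {t : ℝ}
    (hs : MeasurableSet s) (hf' : ∀ x ∈ s, HasFDerivWithinAt f (f' x) s x)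
    (ht : ∀ x ∈ s, |(f' x).det| ≤ t) :
    μ (f '' s) ≤ ENNReal.ofReal t * μ s :=
  calc μ (f '' s) ≤ ∫⁻ x in s, ENNReal.ofReal |(f' x).det| ∂μ :=
        addHaar_image_le_lintegral_abs_det_fderiv μ hs hf'
    _ ≤ ∫⁻ _ in s, ENNReal.ofReal t ∂μ :=
        setLIntegral_mono' hs fun x hx => ENNReal.ofReal_le_ofReal (ht x hx)
    _ = ENNReal.ofReal t * μ s := setLIntegral_const s _

theorem volume_singleton_prod_univ (a : ℝ) : volume ({a} ×ˢ (univ : Set ℝ)) = 0 := by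
  rw [Measure.volume_eq_prod, Measure.prod_prod, Real.volume_singleton, zero_mul]

/-- Up to the null line `X.1 = 1`, the strip `0 ≤ X.1 ≤ 1` meets each orbit of the deck
translations once, so translating the pieces of `f '' A` back into it costs no area. -/
theorem volume_setOf_exists_image_eq_add_intCast_le {f : ℝ × ℝ → ℝ × ℝ}
    (hf : Differentiable ℝ f) {A : Set (ℝ × ℝ)} (hA : MeasurableSet A) {t : ℝ}
    (ht : ∀ Z ∈ A, |(fderiv ℝ f Z).det| ≤ t) :
    volume {X : ℝ × ℝ | X.1 ∈ Icc (0 : ℝ) 1 ∧ ∃ Z ∈ A, ∃ m : ℤ, f Z = X + ((m : ℝ), (0 : ℝ))}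
      ≤ ENNReal.ofReal t * volume A := by
  set piece : ℤ → Set (ℝ × ℝ) := fun m => A ∩ f ⁻¹' (Ico (m : ℝ) (m + 1) ×ˢ univ)
  have hpiece : ∀ m, MeasurableSet (piece m) := fun m =>
    hA.inter (hf.continuous.measurable (measurableSet_Ico.prod .univ))
  have hdisj : Pairwise (Disjoint on piece) := fun m m' hmm' =>
    ((((pairwise_disjoint_Ico_intCast ℝ) hmm').set_prod_left univ univ).preimage f).mono
      inter_subset_right inter_subset_right
  have hsub : {X : ℝ × ℝ | X.1 ∈ Icc (0 : ℝ) 1 ∧ ∃ Z ∈ A, ∃ m : ℤ,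
      f Z = X + ((m : ℝ), (0 : ℝ))} ⊆
      {1} ×ˢ univ ∪ ⋃ m : ℤ, (fun Y => Y + (-(m : ℝ), (0 : ℝ))) '' (f '' piece m) := by
    rintro X ⟨hX, Z, hZ, m, hm⟩
    rcases hX.2.lt_or_eq with hlt | heq
    · refine .inr (mem_iUnion.2 ⟨m, f Z, ⟨Z, ⟨hZ, ?_⟩, rfl⟩, ?_⟩)
      · simp only [mem_preimage, mem_prod, hm, Prod.fst_add, mem_Ico, mem_univ, and_true]
        constructor <;> linarith [hX.1]
      · rw [hm]
        ext <;> simp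
    · exact .inl ⟨heq, trivial⟩
  calc _ ≤ volume ({1} ×ˢ (univ : Set ℝ)) +
        volume (⋃ m : ℤ, (fun Y => Y + (-(m : ℝ), (0 : ℝ))) '' (f '' piece m)) :=
        (measure_mono hsub).trans (measure_union_le _ _)
    _ ≤ ∑' m : ℤ, volume (f '' piece m) := by
        rw [volume_singleton_prod_univ, zero_add]
        refine (measure_iUnion_le _).trans (ENNReal.tsum_le_tsum fun m => ?_)
        rw [image_add_right, measure_preimage_add_right]
    _ ≤ ∑' m : ℤ, ENNReal.ofReal t * volume (piece m) :=
        ENNReal.tsum_le_tsum fun m => addHaar_image_le_ofReal_mul volume (hpiece m)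
          (fun Z _ => (hf Z).hasFDerivAt.hasFDerivWithinAt) fun Z hZ => ht Z hZ.1
    _ = ENNReal.ofReal t * volume (⋃ m, piece m) := by
        rw [ENNReal.tsum_mul_left, measure_iUnion hdisj hpiece]
    _ ≤ ENNReal.ofReal t * volume A := by
        gcongr
        exact iUnion_subset fun m => inter_subset_left

theorem sqrt_add_le_sqrt_add_sqrt {x y : ℝ} (hx : 0 ≤ x) (hy : 0 ≤ y) : √(x + y) ≤ √x + √y := by
  rw [Real.sqrt_le_left (by positivity)]
  nlinarith [Real.sq_sqrt hx, Real.sq_sqrt hy, mul_nonneg (Real.sqrt_nonneg x) (Real.sqrt_nonneg y)]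

theorem sqrt_natCast_le_self (s : ℕ) : √(s : ℝ) ≤ s := by
  rcases Nat.eq_zero_or_pos s with rfl | hs
  · simp
  · exact Real.sqrt_le_self_iff.2 (.inr (by exact_mod_cast hs))

/-- With `β ≤ λ/2, c/2`, both the `e^{-λs}` gained along `s` hyperbolic steps and the tail
`e^{-c√(r+1)}` beat `e^{2β√(n+1)}`, by subadditivity of `√`. -/
theorem mul_sqrt_sub_mul_sub_mul_sqrt_le {lam c β : ℝ} (hβ : 0 ≤ β) (hβlam : 2 * β ≤ lam)
    (hβc : 2 * β ≤ c) {r s n : ℕ} (hrs : r + s = n) :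
    β * √(n : ℝ) - lam * s - c * √((r + 1 : ℕ) : ℝ) ≤ -(β * √((n + 1 : ℕ) : ℝ)) := by
  have hn : √(n : ℝ) ≤ √((n + 1 : ℕ) : ℝ) := Real.sqrt_le_sqrt (by push_cast; linarith)
  have hsplit : √((n + 1 : ℕ) : ℝ) ≤ s + √((r + 1 : ℕ) : ℝ) :=
    calc √((n + 1 : ℕ) : ℝ) = √((s : ℝ) + ((r + 1 : ℕ) : ℝ)) := by
          rw [← hrs]; push_cast; ring_nf
      _ ≤ √(s : ℝ) + √((r + 1 : ℕ) : ℝ) := sqrt_add_le_sqrt_add_sqrt (by positivity) (by positivity)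
      _ ≤ s + √((r + 1 : ℕ) : ℝ) := by gcongr; exact sqrt_natCast_le_self s
  nlinarith [mul_le_mul_of_nonneg_left hn hβ, mul_le_mul_of_nonneg_left hsplit hβ,
    mul_nonneg (sub_nonneg.2 hβlam) (Nat.cast_nonneg s),
    mul_nonneg (sub_nonneg.2 hβc) (Real.sqrt_nonneg ((r + 1 : ℕ) : ℝ))]

theorem summable_natCast_mul_exp_neg_mul_sqrt {β : ℝ} (hβ : 0 < β) :
    Summable fun n : ℕ => (n : ℝ) * exp (-(β * √n)) := by
  refine ((Real.summable_one_div_nat_pow.2 one_lt_two).mul_left (720 / β ^ 6)).of_nonneg_of_le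
    (fun n => by positivity) fun n => ?_
  rcases Nat.eq_zero_or_pos n with rfl | hn
  · simp
  have hn' : (0 : ℝ) < n := by exact_mod_cast hn
  have hexp : β ^ 6 * (n : ℝ) ^ 3 / 720 ≤ exp (β * √n) := by
    have h := Real.pow_div_factorial_le_exp (β * √n) (by positivity) 6
    rwa [mul_pow, show √(n : ℝ) ^ 6 = (n : ℝ) ^ 3 by
      rw [show 6 = 2 * 3 from rfl, pow_mul, Real.sq_sqrt hn'.le]] at h
  rw [exp_neg, ← div_eq_mul_inv, div_le_iff₀ (exp_pos _)]
  calc (n : ℝ) = 720 / β ^ 6 * (1 / (n : ℝ) ^ 2) * (β ^ 6 * (n : ℝ) ^ 3 / 720) := by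
        field_simp
    _ ≤ 720 / β ^ 6 * (1 / (n : ℝ) ^ 2) * exp (β * √n) := by gcongr

theorem exists_pos_forall_of_eventually {P : ℕ → ℝ → Prop}
    (hP : ∀ n s t, s ≤ t → P n t → P n s) {b : ℕ → ℝ} (hb : ∀ n, 0 < b n)
    (hpos : ∀ n, ∃ ε > 0, P n ε) (hev : ∀ᶠ n in atTop, P n (b n)) :
    ∃ c > 0, ∀ n, P n (c * b n) := by
  obtain ⟨N, hN⟩ := eventually_atTop.1 hev
  have hfin : ∀ N, ∃ c > 0, c ≤ 1 ∧ ∀ n < N, P n (c * b n) := by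
    intro N
    induction N with
    | zero => exact ⟨1, one_pos, le_rfl, fun n hn => absurd hn n.not_lt_zero⟩
    | succ N ih =>
      obtain ⟨c, hc, hc1, h⟩ := ih
      obtain ⟨ε, hε, hPε⟩ := hpos N
      have hb' := hb N
      refine ⟨min c (ε / b N), by positivity, (min_le_left _ _).trans hc1, fun n hn => ?_⟩
      rcases Nat.lt_succ_iff_lt_or_eq.1 hn with hn | rfl
      · exact hP _ _ _ (mul_le_mul_of_nonneg_right (min_le_left _ _) (hb n).le) (h n hn)
      · refine hP _ _ _ ?_ hPε
        calc min c (ε / b n) * b n ≤ ε / b n * b n :=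
              mul_le_mul_of_nonneg_right (min_le_right _ _) hb'.le
          _ = ε := div_mul_cancel₀ ε hb'.ne'
  obtain ⟨c, hc, hc1, h⟩ := hfin N
  refine ⟨c, hc, fun n => ?_⟩
  rcases lt_or_ge n N with hn | hn
  · exact h n hn
  · exact hP _ _ _ (mul_le_of_le_one_left (hb n).le hc1) (hN n hn)

def HasPreimageAbsDetLE (G : ℝ × ℝ → ℝ × ℝ) (u v : ℝ) (n : ℕ) (t : ℝ) (X : ℝ × ℝ) : Prop :=
  ∃ Y : ℝ × ℝ, Y.2 ∈ Icc u v ∧ (∃ m : ℤ, G^[n] Y = X + ((m : ℝ), (0 : ℝ))) ∧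
    absDetIter2 G n Y ≤ t

theorem HasPreimageAbsDetLE.mono {G : ℝ × ℝ → ℝ × ℝ} {u v : ℝ} {n : ℕ} {s t : ℝ}
    {X : ℝ × ℝ} (h : HasPreimageAbsDetLE G u v n s X) (hst : s ≤ t) :
    HasPreimageAbsDetLE G u v n t X :=
  let ⟨Y, hY, hm, hdet⟩ := h
  ⟨Y, hY, hm, hdet.trans hst⟩

section CylinderLift

variable {G : ℝ × ℝ → ℝ × ℝ} {k : ℤ}
  (hGper : ∀ X : ℝ × ℝ, G (X + ((1 : ℝ), (0 : ℝ))) = G X + ((k : ℝ), (0 : ℝ)))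
  {u v : ℝ}
include hGper

theorem iterate_add_intCast (n : ℕ) (m : ℤ) (X : ℝ × ℝ) :
    G^[n] (X + ((m : ℝ), (0 : ℝ))) = G^[n] X + (((m * k ^ n : ℤ) : ℝ), (0 : ℝ)) := by
  simp only [prod_intCast_zero_eq_zsmul] at hGper ⊢
  exact iterate_map_add_zsmul hGper n m X

theorem absDetIter2_add_intCast (n : ℕ) (m : ℤ) (X : ℝ × ℝ) :
    absDetIter2 G n (X + ((m : ℝ), (0 : ℝ))) = absDetIter2 G n X := by
  rw [absDetIter2, fderiv_apply_add_eq (iterate_add_intCast hGper n m), absDetIter2]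

theorem firstExpTime2_add_intCast (lam : ℝ) (m : ℤ) (X : ℝ × ℝ) :
    firstExpTime2 G lam (X + ((m : ℝ), (0 : ℝ))) = firstExpTime2 G lam X := by
  simp only [firstExpTime2, absDetIter2_add_intCast hGper]

theorem exists_add_intCast_mem_fundamentalDomain {p : ℕ} {W X : ℝ × ℝ} (hW : W.2 ∈ Icc u v)
    {m : ℤ} (hm : G^[p] W = X + ((m : ℝ), (0 : ℝ))) :
    ∃ j : ℤ, W + ((j : ℝ), (0 : ℝ)) ∈ Icc (0 : ℝ) 1 ×ˢ Icc u v ∧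
      ∃ m' : ℤ, G^[p] (W + ((j : ℝ), (0 : ℝ))) = X + ((m' : ℝ), (0 : ℝ)) := by
  obtain ⟨j, hj⟩ := exists_add_intCast_fst_mem_Ico W
  refine ⟨j, ⟨Ico_subset_Icc_self hj, by simpa using hW⟩, m + j * k ^ p, ?_⟩
  rw [iterate_add_intCast hGper, hm, add_intCast_add_intCast]

variable (hG : Differentiable ℝ G)
include hG

theorem volume_setOf_forall_pos_hasPreimageAbsDetLE (n : ℕ) :
    volume {X : ℝ × ℝ | X.1 ∈ Icc (0 : ℝ) 1 ∧ ∀ ε > 0, HasPreimageAbsDetLE G u v n ε X} = 0 := by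
  set F := Icc (0 : ℝ) 1 ×ˢ Icc u v
  have hF : volume F ≠ ⊤ := (isCompact_Icc.prod isCompact_Icc).measure_lt_top.ne
  have hle : ∀ ε > (0 : ℝ), volume {X : ℝ × ℝ | X.1 ∈ Icc (0 : ℝ) 1 ∧
      ∀ ε > 0, HasPreimageAbsDetLE G u v n ε X} ≤ ENNReal.ofReal ε * volume F := by
    intro ε hε
    calc _ ≤ volume {X : ℝ × ℝ | X.1 ∈ Icc (0 : ℝ) 1 ∧ ∃ Z ∈ F ∩ {Z | absDetIter2 G n Z ≤ ε},
          ∃ m : ℤ, G^[n] Z = X + ((m : ℝ), (0 : ℝ))} := by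
          refine measure_mono fun X ⟨hX, hpre⟩ => ⟨hX, ?_⟩
          obtain ⟨Y, hY, ⟨m, hm⟩, hdet⟩ := hpre ε hε
          obtain ⟨j, hjF, hj⟩ := exists_add_intCast_mem_fundamentalDomain hGper hY hm
          exact ⟨_, ⟨hjF, (absDetIter2_add_intCast hGper n j Y).trans_le hdet⟩, hj⟩
      _ ≤ ENNReal.ofReal ε * volume (F ∩ {Z | absDetIter2 G n Z ≤ ε}) :=
          volume_setOf_exists_image_eq_add_intCast_le (hG.iterate n)
            ((measurableSet_Icc.prod measurableSet_Icc).inter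
              (measurableSet_le (measurable_absDetIter2 n) measurable_const))
            fun Z hZ => hZ.2
      _ ≤ ENNReal.ofReal ε * volume F := by gcongr; exact inter_subset_left
  have hlim : Tendsto (fun ε => ENNReal.ofReal ε * volume F) (𝓝[>] 0) (𝓝 0) := by
    simpa using ENNReal.Tendsto.mul_const
      ((ENNReal.continuous_ofReal.tendsto 0).mono_left nhdsWithin_le_nhds)
      (.inr hF)
  exact nonpos_iff_eq_zero.1 (ge_of_tendsto hlim (eventually_nhdsWithin_of_forall hle))

variable (hGinv : ∀ X : ℝ × ℝ, X.2 ∈ Icc u v → (G X).2 ∈ Icc u v)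
include hGinv

theorem HasPreimageAbsDetLE.exists_split (lam : ℝ) {n : ℕ} {t : ℝ} {X : ℝ × ℝ}
    (h : HasPreimageAbsDetLE G u v n t X) :
    ∃ p ∈ antidiagonal n, ∃ Z ∈ Icc (0 : ℝ) 1 ×ˢ Icc u v,
      ((p.1 + 1 : ℕ) : ℕ∞) ≤ firstExpTime2 G lam Z ∧
      absDetIter2 G p.1 Z ≤ t * exp (-(lam * p.2)) ∧
      ∃ m : ℤ, G^[p.1] Z = X + ((m : ℝ), (0 : ℝ)) := by
  obtain ⟨Y, hY, ⟨m, hm⟩, hdet⟩ := h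
  obtain ⟨r, s, hrs, hr, hs⟩ := exists_add_eq_le_firstExpTime2 hG lam n Y
  have hsY : (G^[s] Y).2 ∈ Icc u v := MapsTo.iterate (fun X hX => hGinv X hX) s hY
  rw [← hrs, iterate_add_apply] at hm
  obtain ⟨j, hjF, hj⟩ := exists_add_intCast_mem_fundamentalDomain hGper hsY hm
  refine ⟨(r, s), mem_antidiagonal.2 hrs, _, hjF, ?_, ?_, hj⟩
  · rwa [firstExpTime2_add_intCast hGper]
  · rw [absDetIter2_add_intCast hGper, exp_neg, ← div_eq_mul_inv, le_div_iff₀' (exp_pos _)]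
    exact hs.trans hdet

theorem volume_setOf_hasPreimageAbsDetLE_le (lam : ℝ) (n : ℕ) (t : ℝ) :
    volume {X | X ∈ Icc (0 : ℝ) 1 ×ˢ Icc u v ∧ HasPreimageAbsDetLE G u v n t X} ≤
      ∑ p ∈ antidiagonal n, ENNReal.ofReal (t * exp (-(lam * p.2))) *
        volume {Z ∈ Icc (0 : ℝ) 1 ×ˢ Icc u v | ((p.1 + 1 : ℕ) : ℕ∞) ≤ firstExpTime2 G lam Z} := by
  set bad : ℕ × ℕ → Set (ℝ × ℝ) := fun p =>
    {Z ∈ Icc (0 : ℝ) 1 ×ˢ Icc u v | ((p.1 + 1 : ℕ) : ℕ∞) ≤ firstExpTime2 G lam Z} ∩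
      {Z | absDetIter2 G p.1 Z ≤ t * exp (-(lam * p.2))}
  calc _ ≤ volume (⋃ p ∈ antidiagonal n, {X : ℝ × ℝ | X.1 ∈ Icc (0 : ℝ) 1 ∧
        ∃ Z ∈ bad p, ∃ m : ℤ, G^[p.1] Z = X + ((m : ℝ), (0 : ℝ))}) := by
        refine measure_mono fun X ⟨hX, hpre⟩ => ?_
        obtain ⟨p, hp, Z, hZ, hZh, hZdet, hZX⟩ := hpre.exists_split hGper hG hGinv lam
        exact mem_biUnion hp ⟨hX.1, Z, ⟨⟨hZ, hZh⟩, hZdet⟩, hZX⟩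
    _ ≤ ∑ p ∈ antidiagonal n, volume {X : ℝ × ℝ | X.1 ∈ Icc (0 : ℝ) 1 ∧
        ∃ Z ∈ bad p, ∃ m : ℤ, G^[p.1] Z = X + ((m : ℝ), (0 : ℝ))} :=
        measure_biUnion_finset_le _ _
    _ ≤ _ := by
        refine Finset.sum_le_sum fun p _ => ?_
        refine (volume_setOf_exists_image_eq_add_intCast_le (hG.iterate p.1) ?_
          fun Z hZ => hZ.2).trans (by gcongr; exact inter_subset_left)
        exact ((measurableSet_Icc.prod measurableSet_Icc).inter
          (measurableSet_natCast_le_firstExpTime2 _)).inter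
          (measurableSet_le (measurable_absDetIter2 _) measurable_const)

theorem volume_setOf_hasPreimageAbsDetLE_exp_le {lam C c β : ℝ} (hβ : 0 ≤ β) (hβlam : 2 * β ≤ lam)
    (hβc : 2 * β ≤ c) (hC : 0 ≤ C)
    (hGamma : ∀ n : ℕ, 1 ≤ n →
      volume {X ∈ Icc (0 : ℝ) 1 ×ˢ Icc u v | (n : ℕ∞) ≤ firstExpTime2 G lam X} ≤
        ENNReal.ofReal (C * exp (-c * √n)))
    (n : ℕ) :
    volume {X | X ∈ Icc (0 : ℝ) 1 ×ˢ Icc u v ∧ HasPreimageAbsDetLE G u v n (exp (β * √n)) X} ≤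
      ENNReal.ofReal (C * (((n + 1 : ℕ) : ℝ) * exp (-(β * √((n + 1 : ℕ) : ℝ))))) := by
  refine (volume_setOf_hasPreimageAbsDetLE_le hGper hG hGinv lam n _).trans ?_
  calc _ ≤ ∑ _p ∈ antidiagonal n, ENNReal.ofReal (C * exp (-(β * √((n + 1 : ℕ) : ℝ)))) := by
        refine Finset.sum_le_sum fun p hp => ?_
        have hrs := mem_antidiagonal.1 hp
        calc _ ≤ ENNReal.ofReal (exp (β * √n) * exp (-(lam * p.2))) *
              ENNReal.ofReal (C * exp (-c * √((p.1 + 1 : ℕ) : ℝ))) := by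
              gcongr; exact hGamma _ (Nat.le_add_left 1 _)
          _ = ENNReal.ofReal (C * exp (β * √n - lam * p.2 - c * √((p.1 + 1 : ℕ) : ℝ))) := by
              rw [← ENNReal.ofReal_mul (by positivity)]
              simp only [sub_eq_add_neg, exp_add, neg_mul]
              ring_nf
          _ ≤ _ := by gcongr; exact mul_sqrt_sub_mul_sub_mul_sqrt_le hβ hβlam hβc hrs
    _ = _ := by
        rw [Finset.sum_const, Finset.Nat.card_antidiagonal, nsmul_eq_mul,
          ← ENNReal.ofReal_natCast, ← ENNReal.ofReal_mul (by positivity), mul_left_comm]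

theorem tsum_volume_setOf_hasPreimageAbsDetLE_exp_ne_top {lam C c β : ℝ} (hβ : 0 < β)
    (hβlam : 2 * β ≤ lam) (hβc : 2 * β ≤ c) (hC : 0 ≤ C)
    (hGamma : ∀ n : ℕ, 1 ≤ n →
      volume {X ∈ Icc (0 : ℝ) 1 ×ˢ Icc u v | (n : ℕ∞) ≤ firstExpTime2 G lam X} ≤
        ENNReal.ofReal (C * exp (-c * √n))) :
    ∑' n : ℕ, volume {X | X ∈ Icc (0 : ℝ) 1 ×ˢ Icc u v ∧
      HasPreimageAbsDetLE G u v n (exp (β * √n)) X} ≠ ⊤ := by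
  have hterm : Summable fun n : ℕ => C * (((n + 1 : ℕ) : ℝ) * exp (-(β * √((n + 1 : ℕ) : ℝ)))) :=
    ((summable_nat_add_iff 1).2 (summable_natCast_mul_exp_neg_mul_sqrt hβ)).mul_left C
  refine ne_top_of_le_ne_top ENNReal.ofReal_ne_top (calc
    _ ≤ ∑' n : ℕ, ENNReal.ofReal (C * (((n + 1 : ℕ) : ℝ) * exp (-(β * √((n + 1 : ℕ) : ℝ))))) :=
      ENNReal.tsum_le_tsum fun n => volume_setOf_hasPreimageAbsDetLE_exp_le hGper hG hGinv
        hβ.le hβlam hβc hC hGamma n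
    _ = ENNReal.ofReal (∑' n : ℕ, C * (((n + 1 : ℕ) : ℝ) * exp (-(β * √((n + 1 : ℕ) : ℝ))))) :=
      (ENNReal.ofReal_tsum_of_nonneg (fun n => by positivity) hterm).symm)

end CylinderLift

end VianaBackwardContraction

open VianaBackwardContraction

theorem viana_backward_contraction_general
    (u v : ℝ)
    (G : ℝ × ℝ → ℝ × ℝ) (hG : ContDiff ℝ 1 G) (k : ℤ)
    (hGper : ∀ X : ℝ × ℝ, G (X + ((1 : ℝ), (0 : ℝ))) = G X + ((k : ℝ), (0 : ℝ)))
    (hGinv : ∀ X : ℝ × ℝ, X.2 ∈ Icc u v → (G X).2 ∈ Icc u v)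
    (lam : ℝ) (hlam : 0 < lam)
    (C c : ℝ) (hC : 0 < C) (hc : 0 < c)
    (hGamma : ∀ n : ℕ, 1 ≤ n →
      volume {X ∈ Icc (0 : ℝ) 1 ×ˢ Icc u v | (n : ℕ∞) ≤ firstExpTime2 G lam X} ≤
        ENNReal.ofReal (C * Real.exp (-c * Real.sqrt n))) :
    ∃ β : ℝ, 0 < β ∧ ∀ᵐ X ∂(volume.restrict (Icc (0 : ℝ) 1 ×ˢ Icc u v)),
      ∃ CX : ℝ, 0 < CX ∧ ∀ n : ℕ, 1 ≤ n → ∀ Y : ℝ × ℝ, Y.2 ∈ Icc u v →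
        (∃ m : ℤ, G^[n] Y = X + ((m : ℝ), (0 : ℝ))) →
        CX * Real.exp (β * Real.sqrt n) < absDetIter2 G n Y := by
  have hGd : Differentiable ℝ G := hG.differentiable one_ne_zero
  set β := min lam c / 2 with hβ_def
  have hβ : 0 < β := by positivity
  have hβlam : 2 * β ≤ lam := by linarith [hβ_def, min_le_left lam c]
  have hβc : 2 * β ≤ c := by linarith [hβ_def, min_le_right lam c]
  have hsum := tsum_volume_setOf_hasPreimageAbsDetLE_exp_ne_top hGper hGd hGinv hβ hβlam hβc
    hC.le hGamma
  have hcrit : ∀ᵐ X ∂volume, ∀ n, ¬(X.1 ∈ Icc (0 : ℝ) 1 ∧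
      ∀ ε > 0, HasPreimageAbsDetLE G u v n ε X) :=
    ae_all_iff.2 fun n => measure_eq_zero_iff_ae_notMem.1
      (volume_setOf_forall_pos_hasPreimageAbsDetLE hGper hGd n)
  refine ⟨β, hβ, ?_⟩
  filter_upwards [ae_restrict_mem (measurableSet_Icc.prod measurableSet_Icc),
    ae_restrict_of_ae (ae_eventually_notMem hsum), ae_restrict_of_ae hcrit]
    with X hXF hXtail hXcrit
  obtain ⟨CX, hCX, hX⟩ := exists_pos_forall_of_eventually
    (P := fun n t => ¬HasPreimageAbsDetLE G u v n t X) (fun n s t hst h h' => h (h'.mono hst))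
    (fun n => exp_pos _) (fun n => by simpa [hXF.1] using hXcrit n)
    (hXtail.mono fun n hn h => hn ⟨hXF, h⟩)
  exact ⟨CX, hCX, fun n _ Y hY hm => lt_of_not_ge fun hle => hX n ⟨Y, hY, hm, hle⟩⟩

/-- Backward contraction for maps of the cylinder `S¹ × I` (such as Viana maps, i.e.
`C⁰`-small perturbations of `(s,x) ↦ (d s mod 1, a₀ + α sin (2π s) - x²)`).  The cylinder
`S¹ × ℝ`, `S¹ = ℝ/ℤ`, is modeled via a `C¹` lift `G : ℝ² → ℝ²` commuting with the deck
translation `(s,x) ↦ (s+1,x)` up to an integer horizontal translation, with compact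
forward-invariant region `S¹ × I`, `I ⊂ (-2,2)`, having fundamental domain
`[0,1] × I`.  If `Leb (Γ_n) ≤ C e^{-c √n}` for the tail sets
`Γ_n = {X ∈ S¹ × I : h(X) ≥ n}` of `h(X) = min {n > 0 : |det DG^n(X)| ≥ e^{λn}}`, then
there is `β > 0` such that for Lebesgue a.e. `X ∈ S¹ × I` there is `C_X > 0` with
`|det DG^n(Y)| > C_X e^{β √n}` for every `n ≥ 1` and every `n`-th preimage `Y` of `X` in
the cylinder. -/
theorem viana_backward_contraction
    (u v : ℝ) (hu : -2 < u) (huv : u ≤ v) (hv : v < 2)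
    (G : ℝ × ℝ → ℝ × ℝ) (hG : ContDiff ℝ 1 G) (k : ℤ)
    (hGper : ∀ X : ℝ × ℝ, G (X + ((1 : ℝ), (0 : ℝ))) = G X + ((k : ℝ), (0 : ℝ)))
    (hGinv : ∀ X : ℝ × ℝ, X.2 ∈ Icc u v → (G X).2 ∈ Icc u v)
    (lam : ℝ) (hlam : 0 < lam)
    (C c : ℝ) (hC : 0 < C) (hc : 0 < c)
    (hGamma : ∀ n : ℕ, 1 ≤ n →
      volume {X ∈ Icc (0 : ℝ) 1 ×ˢ Icc u v | (n : ℕ∞) ≤ firstExpTime2 G lam X} ≤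
        ENNReal.ofReal (C * Real.exp (-c * Real.sqrt n))) :
    ∃ β : ℝ, 0 < β ∧ ∀ᵐ X ∂(volume.restrict (Icc (0 : ℝ) 1 ×ˢ Icc u v)),
      ∃ CX : ℝ, 0 < CX ∧ ∀ n : ℕ, 1 ≤ n → ∀ Y : ℝ × ℝ, Y.2 ∈ Icc u v →
        (∃ m : ℤ, G^[n] Y = X + ((m : ℝ), (0 : ℝ))) →
        CX * Real.exp (β * Real.sqrt n) < absDetIter2 G n Y :=
  viana_backward_contraction_general u v G hG k hGper hGinv lam hlam C c hC hc hGamma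
end
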